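/- If the two-weight $A_p$ condition for a pair $(u,v)$ were sufficient for the strong-type bound $\int (Mf)^p v \le C\int f^p u$ (uniformly, for all pairs with $\|(u,v)\|_{A_p}=1$), then $M$ would be bounded on $L^1(\mathbb{R}^n)$; since $M$ is not bounded on $L^1$, the $A_p$ condition for two weights does not imply the strong-type bound. Concretely: there is no constant $C$ such that $\int_{\mathbb{R}^n} Mf(x)^p\,(Mf)^{1-p}(x)\,dx \le C\int_{\mathbb{R}^n} f(x)\,dx$ holds for all nonnegative $f\in L^1$, even though $((Mf)\,f^{1-p},\, f\,(Mf)^{1-p})\in A_p$ with uniformly bounded constant. -/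

import Mathlib

open MeasureTheory ENNReal Set

noncomputable section

/-- An axis-parallel cube in `ℝⁿ`. -/
def IsCube {n : ℕ} (Q : Set (Fin n → ℝ)) : Prop :=
  ∃ (a : Fin n → ℝ) (r : ℝ), 0 < r ∧ Q = Set.Icc a (fun i => a i + r)

/-- Average of `w` over a set `Q` (w.r.t. Lebesgue measure). -/
def cubeAvg {n : ℕ} (w : (Fin n → ℝ) → ℝ≥0∞) (Q : Set (Fin n → ℝ)) : ℝ≥0∞ :=
  (∫⁻ x in Q, w x) / volume Q

/-- Hardy–Littlewood maximal operator (over cubes containing the point). -/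
def maxOp {n : ℕ} (f : (Fin n → ℝ) → ℝ≥0∞) (x : Fin n → ℝ) : ℝ≥0∞ :=
  ⨆ (Q : Set (Fin n → ℝ)) (_ : IsCube Q) (_ : x ∈ Q), cubeAvg f Q

/-- `M_μ f = (M(f^{1/μ}))^μ`. -/
def maxOpP {n : ℕ} (μ : ℝ) (f : (Fin n → ℝ) → ℝ≥0∞) (x : Fin n → ℝ) : ℝ≥0∞ :=
  (maxOp (fun y => f y ^ (1 / μ)) x) ^ μ

/-- Muckenhoupt `A_p` constant; for `p = 1` the least `C` with `Mw ≤ C w` a.e. -/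
def apConst {n : ℕ} (p : ℝ) (w : (Fin n → ℝ) → ℝ≥0∞) : ℝ≥0∞ :=
  if p = 1 then
    sInf {C : ℝ≥0∞ | ∀ᵐ x ∂(volume : Measure (Fin n → ℝ)), maxOp w x ≤ C * w x}
  else
    ⨆ (Q : Set (Fin n → ℝ)) (_ : IsCube Q),
      cubeAvg w Q * (cubeAvg (fun x => w x ^ (-1 / (p - 1))) Q) ^ (p - 1)

/-- `A_∞` "constant": infimum of the `A_p` constants over `p > 1`. -/
def ainfConst {n : ℕ} (w : (Fin n → ℝ) → ℝ≥0∞) : ℝ≥0∞ :=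
  ⨅ (p : ℝ) (_ : 1 < p), apConst p w

/-- `u(E) = ∫_E u`. -/
def wMeas {n : ℕ} (w : (Fin n → ℝ) → ℝ≥0∞) (E : Set (Fin n → ℝ)) : ℝ≥0∞ :=
  ∫⁻ x in E, w x

/-- `‖g‖_{L^{p,∞}(w)} = sup_y y · w({g>y})^{1/p}`. -/
def wkNorm {n : ℕ} (p : ℝ) (w g : (Fin n → ℝ) → ℝ≥0∞) : ℝ≥0∞ :=
  ⨆ y : ℝ≥0∞, y * (wMeas w {x | y < g x}) ^ (1 / p)

/-- `‖f‖_{L^p(w)}`. -/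
def stNorm {n : ℕ} (p : ℝ) (w f : (Fin n → ℝ) → ℝ≥0∞) : ℝ≥0∞ :=
  (∫⁻ x, f x ^ p * w x) ^ (1 / p)

/-- A locally bounded function `φ : [0,∞] → [0,∞]`. -/
def LocBdd (φ : ℝ≥0∞ → ℝ≥0∞) : Prop :=
  ∀ M : ℝ≥0∞, M ≠ ⊤ → ∃ C : ℝ≥0∞, C ≠ ⊤ ∧ ∀ t ≤ M, φ t ≤ C

/-- A (a.e.) positive, locally integrable weight. -/
def PosLocInt {n : ℕ} (u : (Fin n → ℝ) → ℝ≥0∞) : Prop :=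
  Measurable u ∧ (∀ᵐ x ∂(volume : Measure (Fin n → ℝ)), 0 < u x) ∧
    ∀ Q : Set (Fin n → ℝ), IsCube Q → (∫⁻ x in Q, u x) < ⊤

end

noncomputable section

/-- Two-weight `A_p` constant of a pair `(u, v)`. -/
def twoApConst {n : ℕ} (p : ℝ) (u v : (Fin n → ℝ) → ℝ≥0∞) : ℝ≥0∞ :=
  ⨆ (Q : Set (Fin n → ℝ)) (_ : IsCube Q),
    cubeAvg v Q * (cubeAvg (fun x => u x ^ (1 - p / (p - 1))) Q) ^ (p - 1)

/-!
On a cube `Q` on which `f` has average `a`, we have `Mf ≥ a`, so `f (Mf)^{1-p} ≤ a^{1-p} f` and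
`(Mf f^{1-p})^{1-p'} ≤ a^{1-p'} f` on `Q`. Averaging over `Q`, the `A_p` product of the pair is at
most `a^{2-p} (a^{2-p'})^{p-1} = 1`.

On the other hand `(Mf)^p (Mf)^{1-p} = Mf`, and for the indicator `g` of the unit cube,
`Mg ≥ |Q_{k+1}|⁻¹` on `Q_k = [0, 2^k]^n`. Since `|Q_{k+1} \ Q_k| ≥ |Q_{k+1}| / 2` when `n ≥ 1`, each
dyadic shell contributes at least `1/2` to `∫ Mg`, which is therefore infinite although `∫ g = 1`.
-/

namespace ENNReal

lemma rpow_le_rpow_of_nonpos {x y : ℝ≥0∞} {z : ℝ} (hz : z ≤ 0) (h : x ≤ y) : y ^ z ≤ x ^ z := by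
  simpa [rpow_neg] using ENNReal.inv_le_inv.mpr (rpow_le_rpow h (neg_nonneg.mpr hz))

lemma rpow_mul_rpow_one_sub {x : ℝ≥0∞} (hx : x ≠ ⊤) {p : ℝ} (hp : 0 < p) :
    x ^ p * x ^ (1 - p) = x := by
  rcases eq_or_ne x 0 with rfl | hx0
  · rw [zero_rpow_of_pos hp, zero_mul]
  · rw [← rpow_add _ _ hx0 hx, add_sub_cancel, rpow_one]

end ENNReal

section Cubes

variable {n : ℕ}

lemma IsCube.measurableSet {Q : Set (Fin n → ℝ)} (hQ : IsCube Q) : MeasurableSet Q := by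
  obtain ⟨a, r, -, rfl⟩ := hQ
  exact measurableSet_Icc

lemma IsCube.volume_ne_zero {Q : Set (Fin n → ℝ)} (hQ : IsCube Q) : volume Q ≠ 0 := by
  obtain ⟨a, r, hr, rfl⟩ := hQ
  simp [Real.volume_Icc_pi, hr]

lemma IsCube.volume_ne_top {Q : Set (Fin n → ℝ)} (hQ : IsCube Q) : volume Q ≠ ⊤ := by
  obtain ⟨a, r, -, rfl⟩ := hQ
  simp [Real.volume_Icc_pi]

lemma isCube_Icc_zero {r : ℝ} (hr : 0 < r) : IsCube (Icc (0 : Fin n → ℝ) fun _ => r) :=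
  ⟨0, r, hr, by simp⟩

lemma volume_Icc_zero (r : ℝ) : volume (Icc (0 : Fin n → ℝ) fun _ => r) = ENNReal.ofReal r ^ n := by
  simp [Real.volume_Icc_pi]

lemma cubeAvg_le_maxOp {f : (Fin n → ℝ) → ℝ≥0∞} {Q : Set (Fin n → ℝ)} (hQ : IsCube Q)
    {x : Fin n → ℝ} (hx : x ∈ Q) : cubeAvg f Q ≤ maxOp f x :=
  le_iSup₂_of_le Q hQ (le_iSup_of_le hx le_rfl)

lemma maxOp_le_of_le {f : (Fin n → ℝ) → ℝ≥0∞} {c : ℝ≥0∞} (hf : ∀ y, f y ≤ c) (x : Fin n → ℝ) :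
    maxOp f x ≤ c := by
  refine iSup₂_le fun Q _ => iSup_le fun _ => ENNReal.div_le_of_le_mul ?_
  calc ∫⁻ y in Q, f y ≤ ∫⁻ _ in Q, c := lintegral_mono hf
    _ = c * volume Q := setLIntegral_const Q c

lemma cubeAvg_le_mul_cubeAvg {f g : (Fin n → ℝ) → ℝ≥0∞} (hf : Measurable f) {Q : Set (Fin n → ℝ)}
    {c : ℝ≥0∞} (h : ∀ᵐ x ∂volume.restrict Q, g x ≤ c * f x) : cubeAvg g Q ≤ c * cubeAvg f Q := by
  unfold cubeAvg
  calc (∫⁻ x in Q, g x) / volume Q ≤ (∫⁻ x in Q, c * f x) / volume Q :=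
        ENNReal.div_le_div_right (lintegral_mono_ae h) _
    _ = c * ((∫⁻ x in Q, f x) / volume Q) := by rw [lintegral_const_mul c hf, mul_div_assoc]

end Cubes

section TwoWeight

variable {n : ℕ} {p : ℝ} {f : (Fin n → ℝ) → ℝ≥0∞}

lemma twoApConst_maxOp_cube_le_one (hp : 1 < p) (hf : Measurable f) {Q : Set (Fin n → ℝ)}
    (hQ : IsCube Q) (hfQ : cubeAvg f Q ≠ ⊤) :
    cubeAvg (fun x => f x * maxOp f x ^ (1 - p)) Q *
      (cubeAvg (fun x => (maxOp f x * f x ^ (1 - p)) ^ (1 - p / (p - 1))) Q) ^ (p - 1) ≤ 1 := by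
  set a := cubeAvg f Q
  set c : ℝ := 1 - p / (p - 1) with hc_def
  have hp1 : p - 1 ≠ 0 := by linarith
  have hc : c = -1 / (p - 1) := by rw [hc_def]; field_simp; ring
  have hc_nonpos : c ≤ 0 := by
    rw [hc]
    exact div_nonpos_of_nonpos_of_nonneg (by norm_num) (by linarith)
  have hmax : ∀ᵐ x ∂volume.restrict Q, a ≤ maxOp f x :=
    (ae_restrict_mem hQ.measurableSet).mono fun x hx => cubeAvg_le_maxOp hQ hx
  have hv : cubeAvg (fun x => f x * maxOp f x ^ (1 - p)) Q ≤ a ^ (1 - p) * a := by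
    refine cubeAvg_le_mul_cubeAvg hf (hmax.mono fun x hx => ?_)
    rw [mul_comm]
    exact mul_le_mul_left (ENNReal.rpow_le_rpow_of_nonpos (by linarith) hx) _
  rcases eq_or_ne a 0 with ha0 | ha0
  · -- `a ^ (1 - p) * a = ⊤ * 0 = 0`
    have hv0 : cubeAvg (fun x => f x * maxOp f x ^ (1 - p)) Q = 0 := by
      simpa [ha0] using hv
    rw [hv0, zero_mul]
    exact zero_le_one
  have hu : cubeAvg (fun x => (maxOp f x * f x ^ (1 - p)) ^ c) Q ≤ a ^ c * a := by
    refine cubeAvg_le_mul_cubeAvg hf (hmax.mono fun x hx => ?_)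
    calc (maxOp f x * f x ^ (1 - p)) ^ c ≤ (a * f x ^ (1 - p)) ^ c :=
          ENNReal.rpow_le_rpow_of_nonpos hc_nonpos (by gcongr)
      _ = a ^ c * f x ^ ((1 - p) * c) := by
          rw [ENNReal.mul_rpow_eq_ite, ENNReal.rpow_mul]
          simp [ha0, hfQ]
      _ = a ^ c * f x := by rw [show (1 - p) * c = 1 by rw [hc]; field_simp; ring, ENNReal.rpow_one]
  have hmul : ∀ e : ℝ, a ^ e * a = a ^ (e + 1) := fun e => by
    rw [ENNReal.rpow_add _ _ ha0 hfQ, ENNReal.rpow_one]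
  calc _ ≤ a ^ (1 - p) * a * (a ^ c * a) ^ (p - 1) := by gcongr
    _ = a ^ ((1 - p + 1) + (c + 1) * (p - 1)) := by
        rw [hmul, hmul, ← ENNReal.rpow_mul, ← ENNReal.rpow_add _ _ ha0 hfQ]
    _ = 1 := by rw [show (1 - p + 1) + (c + 1) * (p - 1) = 0 by rw [hc]; field_simp; ring,
          ENNReal.rpow_zero]

lemma twoApConst_maxOp_le_one (hp : 1 < p) (hf : Measurable f)
    (hloc : ∀ Q : Set (Fin n → ℝ), IsCube Q → (∫⁻ x in Q, f x) < ⊤) :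
    twoApConst p (fun x => maxOp f x * f x ^ (1 - p)) (fun x => f x * maxOp f x ^ (1 - p)) ≤ 1 := by
  refine iSup₂_le fun Q hQ => twoApConst_maxOp_cube_le_one hp hf hQ ?_
  exact ENNReal.div_ne_top (hloc Q hQ).ne hQ.volume_ne_zero

end TwoWeight

section Divergence

variable {α : Type*} [MeasurableSpace α] {μ : Measure α} {φ : α → ℝ≥0∞}

lemma inv_two_le_setLIntegral_diff {s t : Set α} (hst : s ⊆ t) (hs : MeasurableSet s)
    (ht_meas : MeasurableSet t) (ht0 : μ t ≠ 0) (ht : μ t ≠ ⊤) (hdouble : 2 * μ s ≤ μ t)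
    (hφ : ∀ x ∈ t, (μ t)⁻¹ ≤ φ x) :
    2⁻¹ ≤ ∫⁻ x in t \ s, φ x ∂μ := by
  have hs_half : μ s ≤ μ t / 2 := by
    rwa [ENNReal.le_div_iff_mul_le (by norm_num) (by norm_num), mul_comm]
  have hdiff : μ t / 2 ≤ μ (t \ s) := by
    rw [measure_sdiff hst hs.nullMeasurableSet (measure_ne_top_of_subset hst ht),
      ← ENNReal.sub_half ht]
    exact tsub_le_tsub_left hs_half _
  calc (2 : ℝ≥0∞)⁻¹ = (μ t)⁻¹ * (μ t / 2) := by
        rw [div_eq_mul_inv, ← mul_assoc, ENNReal.inv_mul_cancel ht0 ht, one_mul]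
    _ ≤ (μ t)⁻¹ * μ (t \ s) := by gcongr
    _ = ∫⁻ _ in t \ s, (μ t)⁻¹ ∂μ := by rw [setLIntegral_const, mul_comm]
    _ ≤ ∫⁻ x in t \ s, φ x ∂μ := setLIntegral_mono' (ht_meas.diff hs) fun x hx => hφ x hx.1

lemma lintegral_eq_top_of_le_setLIntegral {S : ℕ → Set α} (hS : ∀ k, MeasurableSet (S k))
    (hdisj : Pairwise (Function.onFun Disjoint S)) {c : ℝ≥0∞} (hc : c ≠ 0)
    (h : ∀ k, c ≤ ∫⁻ x in S k, φ x ∂μ) : ∫⁻ x, φ x ∂μ = ⊤ := by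
  refine top_unique ?_
  calc ⊤ = ∑' _ : ℕ, c := (ENNReal.tsum_const_eq_top_of_ne_zero hc).symm
    _ ≤ ∑' k, ∫⁻ x in S k, φ x ∂μ := ENNReal.tsum_le_tsum h
    _ = ∫⁻ x in ⋃ k, S k, φ x ∂μ := (lintegral_iUnion hS hdisj φ).symm
    _ ≤ ∫⁻ x, φ x ∂μ := setLIntegral_le_lintegral _ φ

end Divergence

section UnitCube

variable {n : ℕ}

lemma volume_Icc_zero_one : volume (Icc (0 : Fin n → ℝ) fun _ => 1) = 1 := by
  simp [volume_Icc_zero]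

lemma lintegral_indicator_Icc_zero_one :
    ∫⁻ x, (Icc (0 : Fin n → ℝ) fun _ => 1).indicator 1 x = 1 := by
  rw [lintegral_indicator_one measurableSet_Icc, volume_Icc_zero_one]

lemma inv_volume_le_maxOp_indicator {r : ℝ} (hr : 1 ≤ r) {x : Fin n → ℝ}
    (hx : x ∈ Icc (0 : Fin n → ℝ) fun _ => r) :
    (volume (Icc (0 : Fin n → ℝ) fun _ => r))⁻¹ ≤
      maxOp ((Icc (0 : Fin n → ℝ) fun _ => 1).indicator 1) x := by
  have hsub : (Icc (0 : Fin n → ℝ) fun _ => 1) ⊆ Icc 0 fun _ => r :=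
    Icc_subset_Icc le_rfl fun _ => hr
  refine le_of_eq_of_le ?_ (cubeAvg_le_maxOp (isCube_Icc_zero (by linarith)) hx)
  rw [cubeAvg, lintegral_indicator_one measurableSet_Icc, Measure.restrict_apply measurableSet_Icc,
    inter_eq_left.mpr hsub, volume_Icc_zero_one, one_div]

lemma two_mul_volume_Icc_le (hn : 0 < n) (k : ℕ) :
    2 * volume (Icc (0 : Fin n → ℝ) fun _ => 2 ^ k) ≤
      volume (Icc (0 : Fin n → ℝ) fun _ => 2 ^ (k + 1)) := by
  rw [volume_Icc_zero, volume_Icc_zero, pow_succ, ENNReal.ofReal_mul (by positivity), mul_pow,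
    mul_comm, ENNReal.ofReal_ofNat]
  gcongr
  exact le_self_pow₀ (one_le_two : (1 : ℝ≥0∞) ≤ 2) hn.ne'

lemma lintegral_maxOp_indicator_eq_top (hn : 0 < n) :
    ∫⁻ x, maxOp ((Icc (0 : Fin n → ℝ) fun _ => 1).indicator 1) x = ⊤ := by
  set Q : ℕ → Set (Fin n → ℝ) := fun k => Icc 0 fun _ => 2 ^ k
  have hQ : Monotone Q := fun i j hij =>
    Icc_subset_Icc le_rfl fun _ => pow_le_pow_right₀ one_le_two hij
  refine lintegral_eq_top_of_le_setLIntegral (S := fun k => disjointed Q (k + 1))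
    (fun k => MeasurableSet.disjointed (fun _ => measurableSet_Icc) _)
    ((disjoint_disjointed Q).comp_of_injective (add_left_injective 1))
    (c := 2⁻¹) (by norm_num) fun k => ?_
  rw [hQ.disjointed_add_one]
  have hcube := isCube_Icc_zero (n := n) (pow_pos two_pos (k + 1))
  exact inv_two_le_setLIntegral_diff (hQ k.le_succ) measurableSet_Icc measurableSet_Icc
    hcube.volume_ne_zero hcube.volume_ne_top (two_mul_volume_Icc_le hn k)
    fun x hx => inv_volume_le_maxOp_indicator (one_le_pow₀ one_le_two) hx

end UnitCube

theorem stmt5 {n : ℕ} (hn : 0 < n) (p : ℝ) (hp : 1 < p) :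
    (∃ C : ℝ≥0∞, C < ⊤ ∧
      ∀ f : (Fin n → ℝ) → ℝ≥0∞, Measurable f →
        (∀ Q : Set (Fin n → ℝ), IsCube Q → (∫⁻ x in Q, f x) < ⊤) →
        (∀ᵐ x ∂(volume : Measure (Fin n → ℝ)), 0 < maxOp f x ∧ maxOp f x < ⊤) →
        twoApConst p (fun x => maxOp f x * f x ^ (1 - p))
          (fun x => f x * maxOp f x ^ (1 - p)) ≤ C) ∧
    ¬ ∃ C : ℝ≥0∞, C < ⊤ ∧
        ∀ f : (Fin n → ℝ) → ℝ≥0∞, Measurable f → (∫⁻ x, f x) < ⊤ →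
          (∫⁻ x, maxOp f x ^ p * maxOp f x ^ (1 - p)) ≤ C * ∫⁻ x, f x := by
  refine ⟨⟨1, ENNReal.one_lt_top, fun f hf hloc _ => twoApConst_maxOp_le_one hp hf hloc⟩, ?_⟩
  rintro ⟨C, hC, hbound⟩
  set g : (Fin n → ℝ) → ℝ≥0∞ := (Icc (0 : Fin n → ℝ) fun _ => 1).indicator 1
  have hg : ∫⁻ x, g x = 1 := lintegral_indicator_Icc_zero_one
  have hMg_top : ∫⁻ x, maxOp g x = ⊤ := lintegral_maxOp_indicator_eq_top hn
  have hMg : ∀ x, maxOp g x ^ p * maxOp g x ^ (1 - p) = maxOp g x := fun x =>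
    ENNReal.rpow_mul_rpow_one_sub (ne_top_of_le_ne_top ENNReal.one_ne_top
      (maxOp_le_of_le (indicator_le_self' fun _ _ => zero_le_one) x)) (by linarith)
  have hbound_g := hbound g (measurable_one.indicator measurableSet_Icc) (by simp [hg])
  simp only [hMg, hMg_top, hg, mul_one, top_le_iff] at hbound_g
  exact hC.ne hbound_g

end
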